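/- (Remark 2, parts (i) and (iii): the accelerated iterates are sandwiched between the fixed point and the standard value-iteration iterates.) Let Z : ℝ^S → ℝ^S be any operator satisfying the Acceleration Conditions: for every v ∈ ℝ^S with Tv ≤ v, one has T(Zv) ≤ Zv (condition (A)) and Zv ≤ v (condition (B)). Let v* ∈ ℝ^S satisfy Tv* = v*. Let v^0 ∈ ℝ^S satisfy Tv^0 ≤ v^0, and define the sequences v^{n+1} = T v^n and w^0 = v^0, w^{n+1} = Z(T w^n) for n ≥ 0. Then for every n ≥ 0: (i) v* ≤ w^n ≤ v^n componentwise, and (iii) max_{i∈S} |v*_i − w^n_i| ≤ max_{i∈S} |v*_i − v^n_i|. -/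
import Mathlib


noncomputable def Tval {S : Type*} [Fintype S] {A : S → Type*}
    [∀ i, Fintype (A i)] [∀ i, Nonempty (A i)]
    (r : ∀ i, A i → ℝ) (p : ∀ i, A i → S → ℝ) (lam : ℝ) (v : S → ℝ) (i : S) : ℝ :=
  Finset.univ.sup' Finset.univ_nonempty fun a : A i =>
    r i a + lam * ∑ j, p i a j * v j

lemma Tval_mono {S : Type*} [Fintype S] {A : S → Type*}
    [∀ i, Fintype (A i)] [∀ i, Nonempty (A i)]
    (r : ∀ i, A i → ℝ) (p : ∀ i, A i → S → ℝ) (lam : ℝ)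
    (hp : ∀ i (a : A i) (j : S), 0 ≤ p i a j) (hlam0 : 0 ≤ lam)
    {u v : S → ℝ} (huv : ∀ j, u j ≤ v j) (i : S) :
    Tval r p lam u i ≤ Tval r p lam v i := by
  apply Finset.sup'_le
  intro a _
  refine le_trans ?_ (Finset.le_sup' _ (Finset.mem_univ a))
  gcongr
  exact hp i a _
  exact huv _

lemma vstar_le {S : Type*} [Fintype S] [Nonempty S] {A : S → Type*}
    [∀ i, Fintype (A i)] [∀ i, Nonempty (A i)]
    (r : ∀ i, A i → ℝ) (p : ∀ i, A i → S → ℝ) (lam : ℝ)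
    (hp : ∀ i (a : A i) (j : S), 0 ≤ p i a j)
    (hp1 : ∀ i (a : A i), ∑ j, p i a j = 1)
    (hlam0 : 0 ≤ lam) (hlam1 : lam < 1)
    (vstar : S → ℝ) (hfix : ∀ i, Tval r p lam vstar i = vstar i)
    (v : S → ℝ) (hv : ∀ i, Tval r p lam v i ≤ v i) :
    ∀ i, vstar i ≤ v i := by
  set M := Finset.univ.sup' Finset.univ_nonempty (fun j => vstar j - v j) with hMdef
  have hM : ∀ i, vstar i - v i ≤ lam * M := by
    intro i
    have h1 : Tval r p lam vstar i ≤ Tval r p lam v i + lam * M := by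
      apply Finset.sup'_le
      intro a _
      have h2 : r i a + lam * ∑ j, p i a j * v j ≤ Tval r p lam v i :=
        Finset.le_sup' (fun a : A i => r i a + lam * ∑ j, p i a j * v j)
          (Finset.mem_univ a)
      have h3 : ∑ j, p i a j * vstar j ≤ (∑ j, p i a j * v j) + M := by
        have : ∑ j, p i a j * vstar j ≤ ∑ j, (p i a j * v j + p i a j * M) := by
          apply Finset.sum_le_sum
          intro j _
          have hj : vstar j - v j ≤ M :=
            Finset.le_sup' (fun j => vstar j - v j) (Finset.mem_univ j)
          nlinarith [hp i a j]
        rw [Finset.sum_add_distrib, ← Finset.sum_mul, hp1 i a, one_mul] at this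
        linarith
      nlinarith
    have := hv i
    have := hfix i
    linarith
  have hMle : M ≤ lam * M := by
    apply Finset.sup'_le
    intro i _
    exact hM i
  have hM0 : M ≤ 0 := by nlinarith
  intro i
  have : vstar i - v i ≤ M := Finset.le_sup' (fun j => vstar j - v j) (Finset.mem_univ i)
  linarith

theorem accelerated_iterates_sandwich {S : Type*} [Fintype S] [Nonempty S] {A : S → Type*}
    [∀ i, Fintype (A i)] [∀ i, Nonempty (A i)]
    (r : ∀ i, A i → ℝ) (p : ∀ i, A i → S → ℝ) (lam : ℝ)
    (hp : ∀ i (a : A i) (j : S), 0 ≤ p i a j)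
    (hp1 : ∀ i (a : A i), ∑ j, p i a j = 1)
    (hlam0 : 0 ≤ lam) (hlam1 : lam < 1)
    (Z : (S → ℝ) → (S → ℝ))
    (hZA : ∀ v : S → ℝ, (∀ i, Tval r p lam v i ≤ v i) →
      ∀ i, Tval r p lam (Z v) i ≤ Z v i)
    (hZB : ∀ v : S → ℝ, (∀ i, Tval r p lam v i ≤ v i) → ∀ i, Z v i ≤ v i)
    (vstar : S → ℝ) (hfix : ∀ i, Tval r p lam vstar i = vstar i)
    (v0 : S → ℝ) (hv0 : ∀ i, Tval r p lam v0 i ≤ v0 i)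
    (vseq wseq : ℕ → S → ℝ)
    (hvinit : vseq 0 = v0) (hvrec : ∀ n, vseq (n + 1) = Tval r p lam (vseq n))
    (hwinit : wseq 0 = v0) (hwrec : ∀ n, wseq (n + 1) = Z (Tval r p lam (wseq n))) :
    ∀ n : ℕ,
      ((∀ i, vstar i ≤ wseq n i) ∧ (∀ i, wseq n i ≤ vseq n i)) ∧
      Finset.univ.sup' Finset.univ_nonempty (fun i => |vstar i - wseq n i|) ≤
        Finset.univ.sup' Finset.univ_nonempty (fun i => |vstar i - vseq n i|) := by
  -- key invariant
  have key : ∀ n : ℕ, (∀ i, Tval r p lam (vseq n) i ≤ vseq n i) ∧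
      (∀ i, Tval r p lam (wseq n) i ≤ wseq n i) ∧ (∀ i, wseq n i ≤ vseq n i) := by
    intro n
    induction n with
    | zero =>
      refine ⟨by rwa [hvinit], by rwa [hwinit], ?_⟩
      rw [hvinit, hwinit]; intro i; exact le_rfl
    | succ n ih =>
      obtain ⟨hv, hw, hwv⟩ := ih
      have hTw : ∀ i, Tval r p lam (Tval r p lam (wseq n)) i ≤ Tval r p lam (wseq n) i :=
        fun i => Tval_mono r p lam hp hlam0 hw i
      constructor
      · intro i
        rw [hvrec]
        exact Tval_mono r p lam hp hlam0 hv i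
      constructor
      · intro i
        rw [hwrec]
        exact hZA _ hTw i
      · intro i
        rw [hwrec, hvrec]
        calc Z (Tval r p lam (wseq n)) i ≤ Tval r p lam (wseq n) i := hZB _ hTw i
          _ ≤ Tval r p lam (vseq n) i := Tval_mono r p lam hp hlam0 hwv i
  intro n
  obtain ⟨hv, hw, hwv⟩ := key n
  have h1 : ∀ i, vstar i ≤ wseq n i :=
    vstar_le r p lam hp hp1 hlam0 hlam1 vstar hfix _ hw
  have h2 : ∀ i, vstar i ≤ vseq n i :=
    vstar_le r p lam hp hp1 hlam0 hlam1 vstar hfix _ hv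
  refine ⟨⟨h1, hwv⟩, ?_⟩
  apply Finset.sup'_le
  intro i _
  refine le_trans ?_ (Finset.le_sup' _ (Finset.mem_univ i))
  rw [abs_sub_comm, abs_of_nonneg (by linarith [h1 i]), abs_sub_comm (vstar i),
    abs_of_nonneg (by linarith [h2 i])]
  linarith [hwv i]
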